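/- arXiv:1604.03324 — 2 statements merged into one kernel-verified Lean document; each statement's English description precedes it below -/
import Mathlib

section
/- A pair of realization plans (Φ_A, Φ_D) is a Nash equilibrium of the sequence-form game if and only if there exist vectors p, q such that E^T p ≥ Π_A Φ_D, F^T q ≥ Π_D^T Φ_A, Φ_A^T(−Π_A Φ_D + E^T p) = 0, Φ_D^T(−Π_D^T Φ_A + F^T q) = 0, E Φ_A = e, F Φ_D = f, Φ_A ≥ 0, Φ_D ≥ 0. -/
/-!
Each half of the equilibrium condition says that a feasible realization plan `Φ` maximizes the
linear objective `Φ ⬝ᵥ c` over `{Φ | E *ᵥ Φ = e, 0 ≤ Φ}`, with `c = Π_A Φ_D` resp. `Π_Dᵀ Φ_A`.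
By LP duality this holds iff some `p` with `c ≤ Eᵀ p` satisfies complementary slackness
`Φ ⬝ᵥ (Eᵀ p - c) = 0`. Weak duality gives one direction. For the other, optimality of `Φ` is
exactly the hypothesis of Farkas' lemma (in Gale's form) for the dual system
`Eᵀ p ≥ c, e ⬝ᵥ p ≤ Φ ⬝ᵥ c`. Farkas' lemma follows from hyperplane separation once finitely
generated cones are known to be closed, and that follows from the conic Carathéodory theorem:
such a cone is a finite union of injective linear images of closed orthants.
-/

open Function Matrix

section Caratheodory

variable {𝕜 V ι : Type*} [Field 𝕜] [LinearOrder 𝕜] [IsStrictOrderedRing 𝕜]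
  [AddCommGroup V] [Module 𝕜 V] [Fintype ι]

lemma exists_nonneg_linearCombination_eq_support_ssubset {v : ι → V} {c w : ι → 𝕜}
    (hc : 0 ≤ c) (hw : Fintype.linearCombination 𝕜 v w = 0) (hwc : support w ⊆ support c)
    {i₁ : ι} (hi₁ : 0 < w i₁) :
    ∃ d, 0 ≤ d ∧ Fintype.linearCombination 𝕜 v d = Fintype.linearCombination 𝕜 v c ∧
      support d ⊂ support c := by
  classical
  obtain ⟨i₀, hi₀, hmin⟩ := (Finset.univ.filter (0 < w ·)).exists_min_image (fun i => c i / w i)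
    ⟨i₁, by simpa using hi₁⟩
  simp only [Finset.mem_filter, Finset.mem_univ, true_and] at hi₀ hmin
  -- `t` is the largest step along `-w` that keeps `c - t • w` nonnegative; it kills `c i₀`.
  set t := c i₀ / w i₀
  have ht : 0 ≤ t := div_nonneg (hc i₀) hi₀.le
  have hd₀ : c i₀ - t * w i₀ = 0 := by simp [t, hi₀.ne']
  refine ⟨c - t • w, fun i => ?_, by simp [hw], ?_⟩
  · by_cases hwi : 0 < w i
    · simpa using (le_div_iff₀ hwi).mp (hmin i hwi)
    · simpa using (mul_nonpos_of_nonneg_of_nonpos ht (not_lt.mp hwi)).trans (hc i)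
  · refine LE.le.ssubset_of_mem_notMem (a := i₀) (fun i hi => ?_) (hwc hi₀.ne')
      (by simpa using hd₀)
    by_contra hci
    have hwi : w i = 0 := by simpa using mt (@hwc i) hci
    exact hi (by simp [notMem_support.mp hci, hwi])

theorem exists_nonneg_linearIndepOn_support (v : ι → V) {c : ι → 𝕜} (hc : 0 ≤ c) :
    ∃ d, 0 ≤ d ∧ Fintype.linearCombination 𝕜 v d = Fintype.linearCombination 𝕜 v c ∧
      LinearIndepOn 𝕜 v (support d) := by
  induction hn : (support c).ncard using Nat.strong_induction_on generalizing c with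
  | _ n ih =>
  by_cases hli : LinearIndepOn 𝕜 v (support c)
  · exact ⟨c, hc, rfl, hli⟩
  obtain ⟨l, hlsupp, hlv, hl0⟩ := linearDepOn_iff'.mp hli
  have hlc : support l ⊆ support c := by
    simpa [Finsupp.fun_support_eq] using (Finsupp.mem_supported _ _).mp hlsupp
  have hl : Fintype.linearCombination 𝕜 v l = 0 := by
    rwa [← Finsupp.linearCombination_eq_fintype_linearCombination_apply,
      Finsupp.linearEquivFunOnFinite_symm_coe]
  have reduce : ∀ w : ι → 𝕜, Fintype.linearCombination 𝕜 v w = 0 → support w ⊆ support c →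
      ∀ i, 0 < w i → ∃ d, 0 ≤ d ∧
        Fintype.linearCombination 𝕜 v d = Fintype.linearCombination 𝕜 v c ∧
        LinearIndepOn 𝕜 v (support d) := fun w hw hwc i hi => by
    obtain ⟨d, hd, hdc, hsupp⟩ := exists_nonneg_linearCombination_eq_support_ssubset hc hw hwc hi
    obtain ⟨d', hd', hd'd, hli'⟩ := ih _ (hn ▸ Set.ncard_lt_ncard hsupp) hd rfl
    exact ⟨d', hd', hd'd.trans hdc, hli'⟩
  obtain ⟨i, hi⟩ : ∃ i, l i ≠ 0 := by simpa [DFunLike.ext_iff] using hl0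
  rcases hi.lt_or_gt with hneg | hpos
  · exact reduce (-l) (by simpa using hl) (by simpa using hlc) i (by simpa using hneg)
  · exact reduce l hl hlc i hpos

end Caratheodory

section FinitelyGeneratedCone

variable {E ι : Type*} [AddCommGroup E] [Module ℝ E] [TopologicalSpace E]
  [IsTopologicalAddGroup E] [ContinuousSMul ℝ E] [T2Space E] [Fintype ι]

theorem isClosed_image_Ici_linearCombination (v : ι → E) :
    IsClosed (Fintype.linearCombination ℝ v '' Set.Ici 0) := by
  classical
  have hunion : Fintype.linearCombination ℝ v '' Set.Ici 0 =
      ⋃ (s : Set ι) (_ : LinearIndepOn ℝ v s),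
        Fintype.linearCombination ℝ (fun i : s => v i) '' Set.Ici 0 := by
    ext x
    simp only [Set.mem_image, Set.mem_iUnion, Set.mem_Ici]
    constructor
    · rintro ⟨c, hc, rfl⟩
      obtain ⟨d, hd, hdc, hli⟩ := exists_nonneg_linearIndepOn_support v hc
      refine ⟨support d, hli, fun i => d i, fun i => hd i, ?_⟩
      rw [← hdc]
      exact Fintype.sum_of_injective _ Subtype.val_injective _ _
        (fun i hi => by simp [notMem_support.mp fun h => hi ⟨⟨i, h⟩, rfl⟩]) fun _ => rfl
    · rintro ⟨s, -, c, hc, rfl⟩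
      refine ⟨extend Subtype.val c 0, fun i => ?_, ?_⟩
      · by_cases hi : ∃ j : s, j.1 = i
        · obtain ⟨j, rfl⟩ := hi
          simpa [Subtype.val_injective.extend_apply] using hc j
        · simp [extend_apply' _ _ _ hi]
      · exact (Fintype.sum_of_injective _ Subtype.val_injective _ _
          (fun i hi => by simp [extend_apply' _ _ _ hi])
          fun j => by rw [Subtype.val_injective.extend_apply]).symm
  rw [hunion]
  refine isClosed_iUnion_of_finite fun s => isClosed_iUnion_of_finite fun hs => ?_
  exact (LinearMap.isClosedEmbedding_of_injective (LinearMap.ker_eq_bot.mpr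
    hs.fintypeLinearCombination_injective)).isClosedMap _ isClosed_Ici

theorem exists_strongDual_nonneg_of_notMem_image_Ici [LocallyConvexSpace ℝ E] (v : ι → E)
    {b : E} (hb : b ∉ Fintype.linearCombination ℝ v '' Set.Ici 0) :
    ∃ f : StrongDual ℝ E, (∀ i, 0 ≤ f (v i)) ∧ f b < 0 := by
  classical
  let C : ProperCone ℝ E :=
    ⟨(PointedCone.positive ℝ (ι → ℝ)).map (Fintype.linearCombination ℝ v),
      isClosed_image_Ici_linearCombination v⟩
  obtain ⟨f, hf, hfb⟩ := C.hyperplane_separation_point hb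
  refine ⟨f, fun i => hf _ ⟨Pi.single i 1, ?_, ?_⟩, hfb⟩
  · simp [Pi.single_nonneg]
  · simp

end FinitelyGeneratedCone

namespace Matrix

section Farkas

variable {m n : Type*} [Fintype m] [Fintype n]

theorem exists_nonneg_mulVec_eq_of_forall_nonneg (A : Matrix m n ℝ) (b : m → ℝ)
    (h : ∀ y, 0 ≤ y ᵥ* A → 0 ≤ b ⬝ᵥ y) : ∃ x, 0 ≤ x ∧ A *ᵥ x = b := by
  classical
  have hcols : ∀ x, Fintype.linearCombination ℝ (fun j => Aᵀ j) x = A *ᵥ x := fun x => by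
    ext i; simp [Fintype.linearCombination_apply, mulVec, dotProduct, mul_comm]
  by_contra! hb
  obtain ⟨f, hf, hfb⟩ := exists_strongDual_nonneg_of_notMem_image_Ici (fun j => Aᵀ j)
    (b := b) (by rintro ⟨x, hx, hxb⟩; exact hb x hx (by rw [← hcols, hxb]))
  set y : m → ℝ := fun i => f fun j => if i = j then 1 else 0
  have hfy : ∀ z, f z = z ⬝ᵥ y := fun z => by
    simpa [dotProduct] using (f : (m → ℝ) →ₗ[ℝ] ℝ).pi_apply_eq_sum_univ z
  have hyA : 0 ≤ y ᵥ* A := fun j => by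
    have := hf j
    rw [hfy, dotProduct_comm] at this
    exact this
  exact (h y hyA).not_gt (hfy b ▸ hfb)

theorem exists_mulVec_le_of_forall_nonneg (A : Matrix m n ℝ) (b : m → ℝ)
    (h : ∀ y, 0 ≤ y → y ᵥ* A = 0 → 0 ≤ b ⬝ᵥ y) : ∃ x, A *ᵥ x ≤ b := by
  classical
  -- Solve `A x₊ - A x₋ + s = b` with `x₊, x₋, s ≥ 0`.
  obtain ⟨x, hx, hxb⟩ := exists_nonneg_mulVec_eq_of_forall_nonneg
    (fromCols (fromCols A (-A)) (1 : Matrix m m ℝ)) b fun y hy => by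
      simp only [vecMul_fromCols, vecMul_one, Sum.nonneg_elim_iff, vecMul_neg,
        neg_nonneg] at hy
      exact h y hy.2 (le_antisymm hy.1.2 hy.1.1)
  refine ⟨x ∘ Sum.inl ∘ Sum.inl - x ∘ Sum.inl ∘ Sum.inr, ?_⟩
  simp only [fromCols_mulVec, one_mulVec, neg_mulVec] at hxb
  rw [mulVec_sub, ← hxb, sub_eq_add_neg]
  exact le_add_of_nonneg_right fun i => hx (Sum.inr i)

end Farkas

section LinearProgramming

variable {m n : Type*} [Fintype n] {A : Matrix m n ℝ} {b : m → ℝ} {c x : n → ℝ}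

theorem dotProduct_transpose_mulVec_of_mulVec_eq [Fintype m] (hx : A *ᵥ x = b) (p : m → ℝ) :
    x ⬝ᵥ Aᵀ *ᵥ p = b ⬝ᵥ p := by
  rw [dotProduct_mulVec, vecMul_transpose, hx]

theorem dotProduct_le_of_mulVec_eq [Fintype m] {p : m → ℝ} (hx : A *ᵥ x = b) (hx0 : 0 ≤ x)
    (hp : c ≤ Aᵀ *ᵥ p) : x ⬝ᵥ c ≤ b ⬝ᵥ p :=
  (dotProduct_le_dotProduct_of_nonneg_left hp hx0).trans_eq
    (dotProduct_transpose_mulVec_of_mulVec_eq hx p)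

theorem dotProduct_le_mul_of_mulVec_eq_smul (hx : A *ᵥ x = b) (hx0 : 0 ≤ x)
    (hmax : ∀ x', A *ᵥ x' = b → 0 ≤ x' → x' ⬝ᵥ c ≤ x ⬝ᵥ c) {x' : n → ℝ} {t : ℝ}
    (hx'0 : 0 ≤ x') (ht : 0 ≤ t) (hx' : A *ᵥ x' = t • b) : x' ⬝ᵥ c ≤ t * (x ⬝ᵥ c) := by
  rcases ht.eq_or_lt with rfl | ht
  · have := hmax (x + x') (by rw [mulVec_add, hx, hx', zero_smul, add_zero])
      (add_nonneg hx0 hx'0)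
    rw [add_dotProduct] at this
    linarith
  · have := hmax (t⁻¹ • x') (by rw [mulVec_smul, hx', inv_smul_smul₀ ht.ne'])
      (smul_nonneg (inv_nonneg.mpr ht.le) hx'0)
    rwa [smul_dotProduct, smul_eq_mul, inv_mul_le_iff₀ ht] at this

theorem exists_dual_of_forall_dotProduct_le [Fintype m] (hx : A *ᵥ x = b) (hx0 : 0 ≤ x)
    (hmax : ∀ x', A *ᵥ x' = b → 0 ≤ x' → x' ⬝ᵥ c ≤ x ⬝ᵥ c) :
    ∃ p, c ≤ Aᵀ *ᵥ p ∧ b ⬝ᵥ p ≤ x ⬝ᵥ c := by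
  -- The system `-Aᵀ p ≤ -c, b ⬝ᵥ p ≤ x ⬝ᵥ c`; its alternative is `A x' = t • b` with `x', t ≥ 0`.
  obtain ⟨p, hp⟩ := exists_mulVec_le_of_forall_nonneg (fromRows (-Aᵀ) (replicateRow Unit b))
    (Sum.elim (-c) fun _ => x ⬝ᵥ c) fun y hy hyM => by
      have hAy : A *ᵥ (y ∘ Sum.inl) = y (Sum.inr ()) • b := by
        have hrow : y ∘ Sum.inr ᵥ* replicateRow Unit b = y (Sum.inr ()) • b := by
          ext; simp [vecMul, dotProduct, replicateRow]
        rwa [vecMul_fromRows, vecMul_neg, vecMul_transpose, hrow, neg_add_eq_zero] at hyM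
      have := dotProduct_le_mul_of_mulVec_eq_smul hx hx0 hmax (fun i => hy (Sum.inl i))
        (hy (Sum.inr ())) hAy
      simpa [dotProduct, Fintype.sum_sum_type, mul_comm] using this
  rw [fromRows_mulVec, Sum.elim_le_elim_iff, neg_mulVec, neg_le_neg_iff] at hp
  exact ⟨p, hp.1, hp.2 ()⟩

theorem forall_dotProduct_le_iff_exists_dual [Fintype m] (hx : A *ᵥ x = b) (hx0 : 0 ≤ x) :
    (∀ x', A *ᵥ x' = b → 0 ≤ x' → x' ⬝ᵥ c ≤ x ⬝ᵥ c) ↔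
      ∃ p, c ≤ Aᵀ *ᵥ p ∧ x ⬝ᵥ (-c + Aᵀ *ᵥ p) = 0 := by
  simp only [dotProduct_add, dotProduct_neg, dotProduct_transpose_mulVec_of_mulVec_eq hx]
  constructor
  · intro hmax
    obtain ⟨p, hp, hpx⟩ := exists_dual_of_forall_dotProduct_le hx hx0 hmax
    exact ⟨p, hp, by linarith [dotProduct_le_of_mulVec_eq hx hx0 hp]⟩
  · rintro ⟨p, hp, hslack⟩ x' hx' hx'0
    linarith [dotProduct_le_of_mulVec_eq hx' hx'0 hp]

end LinearProgramming

end Matrix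

/-- A pair of realization plans `(ΦA, ΦD)` is a Nash equilibrium of the
sequence-form game (each is feasible and a best response to the other) if and only
if there exist vectors `p, q` such that `Eᵀp ≥ Π_A ΦD`, `Fᵀq ≥ Π_Dᵀ ΦA`,
`ΦAᵀ(−Π_A ΦD + Eᵀp) = 0`, `ΦDᵀ(−Π_Dᵀ ΦA + Fᵀq) = 0`, `E ΦA = e`, `F ΦD = f`,
`ΦA ≥ 0`, `ΦD ≥ 0`. -/
theorem stmt_10 {mA nA mD nD : ℕ}
    (E : Matrix (Fin mA) (Fin nA) ℝ) (e : Fin mA → ℝ)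
    (F : Matrix (Fin mD) (Fin nD) ℝ) (f : Fin mD → ℝ)
    (PayA PayD : Matrix (Fin nA) (Fin nD) ℝ)
    (ΦA : Fin nA → ℝ) (ΦD : Fin nD → ℝ) :
    ((E.mulVec ΦA = e ∧ (∀ i, 0 ≤ ΦA i)) ∧
     (F.mulVec ΦD = f ∧ (∀ j, 0 ≤ ΦD j)) ∧
     (∀ Φ : Fin nA → ℝ, E.mulVec Φ = e → (∀ i, 0 ≤ Φ i) →
        Φ ⬝ᵥ PayA.mulVec ΦD ≤ ΦA ⬝ᵥ PayA.mulVec ΦD) ∧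
     (∀ Ψ : Fin nD → ℝ, F.mulVec Ψ = f → (∀ j, 0 ≤ Ψ j) →
        Ψ ⬝ᵥ PayDᵀ.mulVec ΦA ≤ ΦD ⬝ᵥ PayDᵀ.mulVec ΦA))
    ↔ ∃ (p : Fin mA → ℝ) (q : Fin mD → ℝ),
        (∀ j, PayA.mulVec ΦD j ≤ Eᵀ.mulVec p j) ∧
        (∀ j, PayDᵀ.mulVec ΦA j ≤ Fᵀ.mulVec q j) ∧
        ΦA ⬝ᵥ (-(PayA.mulVec ΦD) + Eᵀ.mulVec p) = 0 ∧
        ΦD ⬝ᵥ (-(PayDᵀ.mulVec ΦA) + Fᵀ.mulVec q) = 0 ∧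
        E.mulVec ΦA = e ∧ F.mulVec ΦD = f ∧
        (∀ i, 0 ≤ ΦA i) ∧ (∀ j, 0 ≤ ΦD j) := by
  constructor
  · rintro ⟨⟨hEA, hA0⟩, ⟨hFD, hD0⟩, hbestA, hbestD⟩
    obtain ⟨p, hp, hslackA⟩ := (forall_dotProduct_le_iff_exists_dual hEA hA0).mp hbestA
    obtain ⟨q, hq, hslackD⟩ := (forall_dotProduct_le_iff_exists_dual hFD hD0).mp hbestD
    exact ⟨p, q, hp, hq, hslackA, hslackD, hEA, hFD, hA0, hD0⟩
  · rintro ⟨p, q, hp, hq, hslackA, hslackD, hEA, hFD, hA0, hD0⟩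
    exact ⟨⟨hEA, hA0⟩, ⟨hFD, hD0⟩,
      (forall_dotProduct_le_iff_exists_dual hEA hA0).mpr ⟨p, hp, hslackA⟩,
      (forall_dotProduct_le_iff_exists_dual hFD hD0).mpr ⟨q, hq, hslackD⟩⟩
end

section
/- The Nash equilibrium system of the sequence-form game is equivalent to a linear complementarity problem: (Φ_A, Φ_D, p, q) solve the NE conditions if and only if z = (Φ_A, Φ_D, p', p'', q', q'') with p = p'−p'', q = q'−q'', all parts nonnegative, satisfies M z + b ≥ 0, z^T(M z + b) = 0, z ≥ 0, for the block matrix M and vector b = (0, 0, e, −e, f, −f)^T defined from (Π_A, Π_D, E, F). -/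
open Matrix

/-- The Nash-equilibrium system of the sequence-form game is equivalent to a linear
complementarity problem: `(ΦA, ΦD, p, q)` solve the NE conditions if and only if the
vector `z = (ΦA, ΦD, p', p'', q', q'')` with `p = p' − p''`, `q = q' − q''`, all
blocks nonnegative, satisfies `Mz + b ≥ 0`, `zᵀ(Mz + b) = 0`, `z ≥ 0`, where `M` is
the block matrix built from `(Π_A, Π_D, E, F)` and `b = (0, 0, e, −e, f, −f)ᵀ`.
The blocks of `Mz + b` are written out componentwise below. -/
theorem stmt_11 {mA nA mD nD : ℕ}
    (E : Matrix (Fin mA) (Fin nA) ℝ) (e : Fin mA → ℝ)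
    (F : Matrix (Fin mD) (Fin nD) ℝ) (f : Fin mD → ℝ)
    (PayA PayD : Matrix (Fin nA) (Fin nD) ℝ)
    (ΦA : Fin nA → ℝ) (ΦD : Fin nD → ℝ) (p : Fin mA → ℝ) (q : Fin mD → ℝ) :
    -- NE (Kuhn–Tucker) system for the pair of best-response LPs
    ((∀ j, PayA.mulVec ΦD j ≤ Eᵀ.mulVec p j) ∧
     (∀ j, PayDᵀ.mulVec ΦA j ≤ Fᵀ.mulVec q j) ∧
     ΦA ⬝ᵥ (-(PayA.mulVec ΦD) + Eᵀ.mulVec p) = 0 ∧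
     ΦD ⬝ᵥ (-(PayDᵀ.mulVec ΦA) + Fᵀ.mulVec q) = 0 ∧
     E.mulVec ΦA = e ∧ F.mulVec ΦD = f ∧
     (∀ i, 0 ≤ ΦA i) ∧ (∀ j, 0 ≤ ΦD j))
    ↔
    -- LCP: z = (ΦA, ΦD, p', p'', q', q'') ≥ 0, Mz + b ≥ 0, zᵀ(Mz + b) = 0
    (∃ (p' p'' : Fin mA → ℝ) (q' q'' : Fin mD → ℝ),
        p = p' - p'' ∧ q = q' - q'' ∧
        (∀ i, 0 ≤ p' i) ∧ (∀ i, 0 ≤ p'' i) ∧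
        (∀ i, 0 ≤ q' i) ∧ (∀ i, 0 ≤ q'' i) ∧
        (∀ i, 0 ≤ ΦA i) ∧ (∀ j, 0 ≤ ΦD j) ∧
        -- Mz + b ≥ 0, block by block
        (∀ i, 0 ≤ (-(PayA.mulVec ΦD) + Eᵀ.mulVec (p' - p'')) i) ∧
        (∀ j, 0 ≤ (-(PayDᵀ.mulVec ΦA) + Fᵀ.mulVec (q' - q'')) j) ∧
        (∀ i, 0 ≤ (-(E.mulVec ΦA) + e) i) ∧
        (∀ i, 0 ≤ (E.mulVec ΦA - e) i) ∧
        (∀ j, 0 ≤ (-(F.mulVec ΦD) + f) j) ∧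
        (∀ j, 0 ≤ (F.mulVec ΦD - f) j) ∧
        -- zᵀ(Mz + b) = 0
        (ΦA ⬝ᵥ (-(PayA.mulVec ΦD) + Eᵀ.mulVec (p' - p''))
          + ΦD ⬝ᵥ (-(PayDᵀ.mulVec ΦA) + Fᵀ.mulVec (q' - q''))
          + p' ⬝ᵥ (-(E.mulVec ΦA) + e) + p'' ⬝ᵥ (E.mulVec ΦA - e)
          + q' ⬝ᵥ (-(F.mulVec ΦD) + f) + q'' ⬝ᵥ (F.mulVec ΦD - f) = 0)) := by
  constructor
  · rintro ⟨h1, h2, h3, h4, hE, hF, hA, hD⟩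
    refine ⟨(fun i => max (p i) 0), (fun i => max (-p i) 0),
            (fun i => max (q i) 0), (fun i => max (-q i) 0), ?_, ?_, ?_, ?_, ?_, ?_, hA, hD,
            ?_, ?_, ?_, ?_, ?_, ?_, ?_⟩
    · funext i; simp [max_def]; split <;> split <;> linarith
    · funext i; simp [max_def]; split <;> split <;> linarith
    · intro i; exact le_max_right _ _
    · intro i; exact le_max_right _ _
    · intro i; exact le_max_right _ _
    · intro i; exact le_max_right _ _
    · intro i
      have hp : (fun i => max (p i) 0) - (fun i => max (-p i) 0) = p := by
        funext i; simp [max_def]; split <;> split <;> linarith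
      rw [hp]; simpa using sub_nonneg.mpr (h1 i)
    · intro j
      have hq : (fun i => max (q i) 0) - (fun i => max (-q i) 0) = q := by
        funext i; simp [max_def]; split <;> split <;> linarith
      rw [hq]; simpa using sub_nonneg.mpr (h2 j)
    · intro i; simp [hE]
    · intro i; simp [hE]
    · intro j; simp [hF]
    · intro j; simp [hF]
    · have hp : (fun i => max (p i) 0) - (fun i => max (-p i) 0) = p := by
        funext i; simp [max_def]; split <;> split <;> linarith
      have hq : (fun i => max (q i) 0) - (fun i => max (-q i) 0) = q := by
        funext i; simp [max_def]; split <;> split <;> linarith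
      rw [hp, hq, h3, h4, hE, hF]; simp
  · rintro ⟨p', p'', q', q'', hp, hq, hp1, hp2, hq1, hq2, hA, hD, hM1, hM2, hE1, hE2, hF1, hF2, hz⟩
    have hE : E.mulVec ΦA = e := by
      funext i; have := hE1 i; have := hE2 i; simp at *; linarith
    have hF : F.mulVec ΦD = f := by
      funext j; have := hF1 j; have := hF2 j; simp at *; linarith
    have t1 : 0 ≤ ΦA ⬝ᵥ (-(PayA.mulVec ΦD) + Eᵀ.mulVec (p' - p'')) :=
      Finset.sum_nonneg fun i _ => mul_nonneg (hA i) (hM1 i)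
    have t2 : 0 ≤ ΦD ⬝ᵥ (-(PayDᵀ.mulVec ΦA) + Fᵀ.mulVec (q' - q'')) :=
      Finset.sum_nonneg fun j _ => mul_nonneg (hD j) (hM2 j)
    have z3 : p' ⬝ᵥ (-(E.mulVec ΦA) + e) = 0 := by rw [hE]; simp
    have z4 : p'' ⬝ᵥ (E.mulVec ΦA - e) = 0 := by rw [hE]; simp
    have z5 : q' ⬝ᵥ (-(F.mulVec ΦD) + f) = 0 := by rw [hF]; simp
    have z6 : q'' ⬝ᵥ (F.mulVec ΦD - f) = 0 := by rw [hF]; simp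
    rw [z3, z4, z5, z6] at hz
    have e1 : ΦA ⬝ᵥ (-(PayA.mulVec ΦD) + Eᵀ.mulVec (p' - p'')) = 0 := by linarith
    have e2 : ΦD ⬝ᵥ (-(PayDᵀ.mulVec ΦA) + Fᵀ.mulVec (q' - q'')) = 0 := by linarith
    subst hp hq
    refine ⟨fun i => ?_, fun j => ?_, e1, e2, hE, hF, hA, hD⟩
    · have := hM1 i; simp at this ⊢; linarith
    · have := hM2 j; simp at this ⊢; linarith
end
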